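/- Let F be strictly convex, let I ≠ ∅, and let S be convex. Suppose that for any x, y ∈ S with x ≠ y there exists i ∈ I such that L(x,y) ∩ Ω_i = ∅, and that for every x ∈ X the farthest projection P_F(x; Ω_i) is nonempty for all i ∈ I. Then the function C₂(x) := Σ_{i∈I} C_F(x; Ω_i) is strictly convex on S. -/

import Mathlib

open Set Pointwise Filter Topology Bornology Function

variable {X : Type*} [NormedAddCommGroup X] [NormedSpace ℝ X]

/-- The Minkowski gauge of `F`: `ρ_F(x) = inf {t ≥ 0 : x ∈ t • F}`. -/
noncomputable def rhoF (F : Set X) (x : X) : ℝ :=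
  sInf {t : ℝ | 0 ≤ t ∧ x ∈ t • F}

/-- The maximal time function `C_F(x; Q) = sup {ρ_F(q - x) : q ∈ Q}`. -/
noncomputable def maxTime (F Q : Set X) (x : X) : ℝ :=
  sSup ((fun q => rhoF F (q - x)) '' Q)

/-- The minimal time function `T_F(x; Θ) = inf {ρ_F(q - x) : q ∈ Θ}`. -/
noncomputable def minTime (F Θ : Set X) (x : X) : ℝ :=
  sInf ((fun q => rhoF F (q - x)) '' Θ)

/-- The farthest projection `P_F(x; Ω) = {ω ∈ Ω : ρ_F(ω - x) = C_F(x; Ω)}`. -/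
def farProj (F Ω : Set X) (x : X) : Set X :=
  {ω ∈ Ω | rhoF F (ω - x) = maxTime F Ω x}

/-- The line through `x` and `y`: `L(x,y) = {t•x + (1-t)•y : t ∈ ℝ}`. -/
def lineThrough (x y : X) : Set X :=
  {z : X | ∃ t : ℝ, z = t • x + (1 - t) • y}

/-! `C_F(·; Ω)` is a supremum of the convex functions `x ↦ ρ_F(q - x)`, hence convex. For
strictness at `z = a • x + b • y`, pick `i` with `L(x, y) ∩ Ω_i = ∅` and a farthest point `ω` of
`Ω_i` from `z`. Then `ω - x` and `ω - y` do not lie on a common ray, and the gauge of a closed,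
bounded, strictly convex neighbourhood of `0` is strictly subadditive on such pairs, so
`C_F(z; Ω_i) = ρ_F(ω - z) < a ρ_F(ω - x) + b ρ_F(ω - y) ≤ a C_F(x; Ω_i) + b C_F(y; Ω_i)`. -/

section Gauge

variable {F : Set X}

lemma rhoF_eq_gauge (hF0 : (0 : X) ∈ F) (x : X) : rhoF F x = gauge F x := by
  have hzero : (0 : ℝ) • F = {0} := zero_smul_set ⟨0, hF0⟩
  rcases eq_or_ne x 0 with rfl | hx
  · rw [gauge_zero]
    refine le_antisymm (csInf_le ⟨0, fun t ht => ht.1⟩ ⟨le_rfl, ?_⟩)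
      (le_csInf ⟨0, le_rfl, ?_⟩ fun t ht => ht.1) <;> simp [hzero]
  · unfold rhoF gauge
    congr 1
    ext t
    refine ⟨fun ⟨ht, hxt⟩ => ⟨ht.lt_of_ne ?_, hxt⟩, fun ⟨ht, hxt⟩ => ⟨ht.le, hxt⟩⟩
    rintro rfl
    exact hx (by simpa [hzero] using hxt)

theorem gauge_add_lt_of_not_sameRay (hFc : IsClosed F) (hFb : IsBounded F)
    (hF0 : (0 : X) ∈ interior F) (hFs : StrictConvex ℝ F) {u v : X} (h : ¬SameRay ℝ u v) :
    gauge F (u + v) < gauge F u + gauge F v := by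
  have hFn : F ∈ 𝓝 (0 : X) := mem_interior_iff_mem_nhds.mp hF0
  have hFa : Absorbent ℝ F := absorbent_nhds_zero hFn
  have hFvb : IsVonNBounded ℝ F := (NormedSpace.isVonNBounded_iff ℝ).mpr hFb
  have hmem : ∀ w : X, w ≠ 0 → (gauge F w)⁻¹ • w ∈ F := fun w hw => by
    refine hFc.closure_subset ((gauge_le_one_iff_mem_closure hFs.convex hFn).mp ?_)
    rw [gauge_smul_of_nonneg (inv_nonneg.mpr (gauge_nonneg w)), smul_eq_mul,
      inv_mul_cancel₀ ((gauge_pos hFa hFvb).mpr hw).ne']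
  have hu : u ≠ 0 := fun hu => h (hu ▸ SameRay.zero_left v)
  have hv : v ≠ 0 := fun hv => h (hv ▸ SameRay.zero_right u)
  set a := gauge F u
  set b := gauge F v
  have ha : 0 < a := (gauge_pos hFa hFvb).mpr hu
  have hb : 0 < b := (gauge_pos hFa hFvb).mpr hv
  have hab : 0 < a + b := add_pos ha hb
  have hne : a⁻¹ • u ≠ b⁻¹ • v := fun he =>
    h (Or.inr (Or.inr ⟨a⁻¹, b⁻¹, inv_pos.mpr ha, inv_pos.mpr hb, he⟩))
  have hcombo := hFs (hmem u hu) (hmem v hv) hne (div_pos ha hab) (div_pos hb hab)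
    (by rw [← add_div, div_self hab.ne'])
  rw [div_eq_inv_mul, div_eq_inv_mul, mul_smul, mul_smul, smul_inv_smul₀ ha.ne',
    smul_inv_smul₀ hb.ne', ← smul_add, ← gauge_lt_one_iff_mem_interior hFs.convex hFn,
    gauge_smul_of_nonneg (inv_nonneg.mpr hab.le), smul_eq_mul, inv_mul_lt_one₀ hab] at hcombo
  exact hcombo

lemma gauge_sub_combo_le (hFconv : Convex ℝ F) (hF0 : (0 : X) ∈ interior F) (q x y : X)
    {a b : ℝ} (ha : 0 ≤ a) (hb : 0 ≤ b) (hab : a + b = 1) :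
    gauge F (q - (a • x + b • y)) ≤ a * gauge F (q - x) + b * gauge F (q - y) := by
  have hsplit : q - (a • x + b • y) = a • (q - x) + b • (q - y) := by
    conv_lhs => rw [← one_smul ℝ q, ← hab]
    module
  rw [hsplit, ← smul_eq_mul, ← smul_eq_mul, ← gauge_smul_of_nonneg ha,
    ← gauge_smul_of_nonneg hb]
  exact gauge_add_le hFconv (absorbent_nhds_zero (mem_interior_iff_mem_nhds.mp hF0)) _ _

end Gauge

lemma not_sameRay_sub_of_notMem_lineThrough {x y ω : X} (hxy : x ≠ y)
    (hω : ω ∉ lineThrough x y) : ¬SameRay ℝ (ω - x) (ω - y) := by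
  rintro (h | h | ⟨r, s, hr, hs, h⟩)
  · exact hω ⟨1, by simp [sub_eq_zero.mp h]⟩
  · exact hω ⟨0, by simp [sub_eq_zero.mp h]⟩
  · have hrs : r - s ≠ 0 := by
      rintro hrs
      rw [sub_eq_zero.mp hrs, ← sub_eq_zero, ← smul_sub, sub_sub_sub_cancel_left] at h
      exact hxy (sub_eq_zero.mp ((smul_eq_zero.mp h).resolve_left hs.ne')).symm
    refine hω ⟨r / (r - s), ?_⟩
    have hω' : (r - s) • ω = r • x - s • y := by
      linear_combination (norm := module) h
    calc ω = (r - s)⁻¹ • ((r - s) • ω) := (inv_smul_smul₀ hrs ω).symm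
      _ = (r / (r - s)) • x + (1 - r / (r - s)) • y := by
        rw [hω']
        match_scalars <;> field_simp; ring

section MaxTime

variable {F Q : Set X}

lemma bddAbove_rhoF_sub_image (hFconv : Convex ℝ F) (hF0 : (0 : X) ∈ interior F)
    (hQ : IsBounded Q) (x : X) : BddAbove ((fun q => rhoF F (q - x)) '' Q) := by
  obtain ⟨K, hK⟩ := hFconv.lipschitz_gauge (mem_interior_iff_mem_nhds.mp hF0)
  simp only [rhoF_eq_gauge (interior_subset hF0)]
  exact ((hK.comp (IsometryEquiv.subRight x).isometry.lipschitz).isBounded_image hQ).bddAbove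

lemma rhoF_sub_le_maxTime (hFconv : Convex ℝ F) (hF0 : (0 : X) ∈ interior F)
    (hQ : IsBounded Q) {q : X} (hq : q ∈ Q) (x : X) : rhoF F (q - x) ≤ maxTime F Q x :=
  le_csSup (bddAbove_rhoF_sub_image hFconv hF0 hQ x) (mem_image_of_mem _ hq)

theorem convexOn_maxTime (hFconv : Convex ℝ F) (hF0 : (0 : X) ∈ interior F)
    (hQ : IsBounded Q) (hQne : Q.Nonempty) : ConvexOn ℝ univ (maxTime F Q) := by
  refine ⟨convex_univ, fun x _ y _ a b ha hb hab => ?_⟩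
  refine csSup_le (hQne.image _) ?_
  rintro _ ⟨q, hq, rfl⟩
  dsimp only
  rw [rhoF_eq_gauge (interior_subset hF0)]
  calc gauge F (q - (a • x + b • y)) ≤ a * gauge F (q - x) + b * gauge F (q - y) :=
        gauge_sub_combo_le hFconv hF0 q x y ha hb hab
    _ ≤ a • maxTime F Q x + b • maxTime F Q y := by
        simp only [smul_eq_mul, ← rhoF_eq_gauge (interior_subset hF0)]
        gcongr <;> exact rhoF_sub_le_maxTime hFconv hF0 hQ hq _

theorem maxTime_combo_lt_of_mem_farProj (hFc : IsClosed F) (hFb : IsBounded F)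
    (hF0 : (0 : X) ∈ interior F) (hFs : StrictConvex ℝ F) (hQ : IsBounded Q) {x y ω : X}
    (hxy : x ≠ y) {a b : ℝ} (ha : 0 < a) (hb : 0 < b) (hab : a + b = 1)
    (hω : ω ∈ farProj F Q (a • x + b • y)) (hωL : ω ∉ lineThrough x y) :
    maxTime F Q (a • x + b • y) < a * maxTime F Q x + b * maxTime F Q y := by
  have hF0' : (0 : X) ∈ F := interior_subset hF0
  have hsplit : ω - (a • x + b • y) = a • (ω - x) + b • (ω - y) := by
    conv_lhs => rw [← one_smul ℝ ω, ← hab]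
    module
  have hray : ¬SameRay ℝ (a • (ω - x)) (b • (ω - y)) := fun h => by
    have := (h.pos_smul_left (inv_pos.mpr ha)).pos_smul_right (inv_pos.mpr hb)
    rw [inv_smul_smul₀ ha.ne', inv_smul_smul₀ hb.ne'] at this
    exact not_sameRay_sub_of_notMem_lineThrough hxy hωL this
  rw [← hω.2, rhoF_eq_gauge hF0', hsplit]
  calc gauge F (a • (ω - x) + b • (ω - y))
      < gauge F (a • (ω - x)) + gauge F (b • (ω - y)) :=
        gauge_add_lt_of_not_sameRay hFc hFb hF0 hFs hray
    _ = a * gauge F (ω - x) + b * gauge F (ω - y) := by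
        rw [gauge_smul_of_nonneg ha.le, gauge_smul_of_nonneg hb.le, smul_eq_mul, smul_eq_mul]
    _ ≤ a * maxTime F Q x + b * maxTime F Q y := by
        simp only [← rhoF_eq_gauge hF0']
        gcongr <;> exact rhoF_sub_le_maxTime hFs.convex hF0 hQ hω.1 _

end MaxTime

theorem stmt16_general {ι : Type*} (F : Set X) (I : Finset ι) (Ω : ι → Set X) (S : Set X)
    (hFc : IsClosed F) (hFb : IsBounded F)
    (hF0 : (0 : X) ∈ interior F) (hFs : StrictConvex ℝ F)
    (hΩb : ∀ i ∈ I, IsBounded (Ω i))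
    (hSconv : Convex ℝ S)
    (hline : ∀ x ∈ S, ∀ y ∈ S, x ≠ y → ∃ i ∈ I, lineThrough x y ∩ Ω i = ∅)
    (hP : ∀ x : X, ∀ i ∈ I, (farProj F (Ω i) x).Nonempty) :
    StrictConvexOn ℝ S (fun x => ∑ i ∈ I, maxTime F (Ω i) x) := by
  refine ⟨hSconv, fun x hx y hy hxy a b ha hb hab => ?_⟩
  obtain ⟨i₀, hi₀, hdisjoint⟩ := hline x hx y hy hxy
  obtain ⟨ω, hω⟩ := hP (a • x + b • y) i₀ hi₀
  have hconvex : ∀ i ∈ I, maxTime F (Ω i) (a • x + b • y) ≤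
      a * maxTime F (Ω i) x + b * maxTime F (Ω i) y := fun i hi =>
    (convexOn_maxTime hFs.convex hF0 (hΩb i hi) ((hP x i hi).mono (sep_subset _ _))).2
      (mem_univ x) (mem_univ y) ha.le hb.le hab
  have hstrict := maxTime_combo_lt_of_mem_farProj hFc hFb hF0 hFs (hΩb i₀ hi₀) hxy ha hb hab hω
    fun hωL => (eq_empty_iff_forall_notMem.mp hdisjoint ω) ⟨hωL, hω.1⟩
  simp only [smul_eq_mul, Finset.mul_sum, ← Finset.sum_add_distrib]
  exact Finset.sum_lt_sum hconvex ⟨i₀, hi₀, hstrict⟩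

/-- Proposition 3.11. -/
theorem stmt16 {ι : Type*} (F : Set X) (I : Finset ι) (Ω : ι → Set X) (S : Set X)
    (hFc : IsClosed F) (hFb : IsBounded F) (hFconv : Convex ℝ F)
    (hF0 : (0 : X) ∈ interior F) (hFs : StrictConvex ℝ F)
    (hΩne : ∀ i ∈ I, (Ω i).Nonempty) (hΩc : ∀ i ∈ I, IsClosed (Ω i))
    (hΩb : ∀ i ∈ I, IsBounded (Ω i))
    (hSne : S.Nonempty) (hSc : IsClosed S) (hSconv : Convex ℝ S)
    (hI : I.Nonempty)
    (hline : ∀ x ∈ S, ∀ y ∈ S, x ≠ y → ∃ i ∈ I, lineThrough x y ∩ Ω i = ∅)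
    (hP : ∀ x : X, ∀ i ∈ I, (farProj F (Ω i) x).Nonempty) :
    StrictConvexOn ℝ S (fun x => ∑ i ∈ I, maxTime F (Ω i) x) :=
  stmt16_general F I Ω S hFc hFb hF0 hFs hΩb hSconv hline hP
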